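/- If the features are full rank, the feature-dependent eigenvalues reduce to those of the normalized Laplacian: suppose D = |X| and that Φ_n is invertible. Then the multiset of eigenvalues of I_D − Σ(φ)^{−1/2} Σ(φ̄) Σ(φ)^{−1/2} equals the multiset of eigenvalues of the normalized Laplacian L_n = I − A_n. -/

import Mathlib

open Matrix Finset

variable {Xb X : Type*} [Fintype Xb] [Fintype X] [DecidableEq Xb] [DecidableEq X]

/-- Marginal probability `w(x) = ∑_{x̄} w(x̄)·w(x|x̄)` of an augmentation. -/
noncomputable def wX (wb : Xb → ℝ) (wc : Xb → X → ℝ) (x : X) : ℝ := ∑ xb, wb xb * wc xb x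

/-- Input–augmentation joint matrix `Ā[x̄,x] = w(x̄,x)`. -/
noncomputable def Abar (wb : Xb → ℝ) (wc : Xb → X → ℝ) : Matrix Xb X ℝ :=
  Matrix.of fun xb x => wb xb * wc xb x

/-- Normalized input–augmentation matrix `Ā_n = D̄^{-1/2} Ā D^{-1/2}`. -/
noncomputable def AbarN (wb : Xb → ℝ) (wc : Xb → X → ℝ) : Matrix Xb X ℝ :=
  (Matrix.diagonal fun xb => (Real.sqrt (wb xb))⁻¹) * Abar wb wc *
    (Matrix.diagonal fun x => (Real.sqrt (wX wb wc x))⁻¹)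

/-- Similarity matrix `A[x,x'] = w(x,x')`. -/
noncomputable def Amat (wb : Xb → ℝ) (wc : Xb → X → ℝ) : Matrix X X ℝ :=
  Matrix.of fun x x' => ∑ xb, wb xb * wc xb x * wc xb x'

/-- Normalized similarity matrix `A_n = D^{-1/2} A D^{-1/2}`. -/
noncomputable def AN (wb : Xb → ℝ) (wc : Xb → X → ℝ) : Matrix X X ℝ :=
  (Matrix.diagonal fun x => (Real.sqrt (wX wb wc x))⁻¹) * Amat wb wc *
    (Matrix.diagonal fun x => (Real.sqrt (wX wb wc x))⁻¹)

/-- Normalized matrix of a map `f` w.r.t. weights `w`: rows `√(w x) · f x`. -/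
noncomputable def Nmat {ι : Type*} (w : X → ℝ) (f : X → ι → ℝ) : Matrix X ι ℝ :=
  Matrix.of fun x i => Real.sqrt (w x) * f x i

/-- `P` is the orthogonal projection onto the column space of `B`. -/
def IsProjOnto {n m : Type*} [Fintype n] [Fintype m]
    (P : Matrix n n ℝ) (B : Matrix n m ℝ) : Prop :=
  P.IsSymm ∧ P * P = P ∧ LinearMap.range P.mulVecLin = LinearMap.range B.mulVecLin

/-- Squared Frobenius norm. -/
noncomputable def frobSq {n m : Type*} [Fintype n] [Fintype m] (M : Matrix n m ℝ) : ℝ :=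
  ∑ i, ∑ j, M i j ^ 2

/-- Spectral contrastive loss. -/
noncomputable def Lspec {d : ℕ} (wb : Xb → ℝ) (wc : Xb → X → ℝ) (f : X → Fin d → ℝ) : ℝ :=
  -2 * ∑ x, ∑ x', (∑ xb, wb xb * wc xb x * wc xb x') * (∑ i, f x i * f x' i)
    + ∑ x, ∑ x', wX wb wc x * wX wb wc x' * (∑ i, f x i * f x' i) ^ 2

/-- Augmentation-averaged representation `f̄(x̄) = ∑_x w(x|x̄) f(x)`. -/
noncomputable def fbar {ι : Type*} (wc : Xb → X → ℝ) (f : X → ι → ℝ) (xb : Xb) (i : ι) : ℝ :=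
  ∑ x, wc xb x * f x i

/-- Downstream classification loss. -/
noncomputable def Lclf {d : ℕ} (wb : Xb → ℝ) (wc : Xb → X → ℝ) (f : X → Fin d → ℝ)
    (ystar : Xb → ℝ) : ℝ :=
  ⨅ v : Fin d → ℝ,
    ∑ xb, wb xb * (if ystar xb * (∑ i, v i * fbar wc f xb i) < 0 then (1 : ℝ) else 0)

/-- Regression loss of features `φ` on a target `g` over augmentations. -/
noncomputable def LregPhi {ι : Type*} [Fintype ι] (w : X → ℝ) (φ : X → ι → ℝ) (g : X → ℝ) : ℝ :=
  ⨅ v : ι → ℝ, ∑ x, w x * ((∑ i, v i * φ x i) - g x) ^ 2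

/-- Inconsistency `Δ(g, y*)`. -/
noncomputable def Delta (wb : Xb → ℝ) (wc : Xb → X → ℝ) (g : X → ℝ) (ystar : Xb → ℝ) : ℝ :=
  ∑ xb, wb xb * ∑ x, wc xb x * (if g x ≠ ystar xb then (1 : ℝ) else 0)

/-- Feature covariance `Σ(φ) = ∑_x w(x)·φ(x)φ(x)ᵀ`. -/
noncomputable def SigmaPhi {ι : Type*} [Fintype ι] (w : X → ℝ) (φ : X → ι → ℝ) :
    Matrix ι ι ℝ :=
  Matrix.of fun i j => ∑ x, w x * φ x i * φ x j

/-- Averaged-feature covariance `Σ(φ̄) = ∑_{x̄} w(x̄)·φ̄(x̄)φ̄(x̄)ᵀ`. -/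
noncomputable def SigmaBar {ι : Type*} [Fintype ι] (wb : Xb → ℝ) (wc : Xb → X → ℝ)
    (φ : X → ι → ℝ) : Matrix ι ι ℝ :=
  Matrix.of fun i j => ∑ xb, wb xb * fbar wc φ xb i * fbar wc φ xb j

/-!
Both covariances factor through `Φ_n`: `Σ(φ) = Φ_nᵀ Φ_n`, and, since `A_n = Ā_nᵀ Ā_n` while
`Ā_n Φ_n` has rows `√w(x̄) φ̄(x̄)`, also `Σ(φ̄) = Φ_nᵀ A_n Φ_n`. For a symmetric `R` with
`R² = Σ(φ)⁻¹` the square matrix `Q = Φ_n R` then satisfies `Qᵀ Q = 1`, so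
`I − R Σ(φ̄) R = Qᵀ (I − A_n) Q` is orthogonally similar to `L_n` and has the same
characteristic polynomial.
-/

theorem Matrix.charpoly_mul_mul_of_mul_eq_one {n R : Type*} [Fintype n] [DecidableEq n]
    [CommRing R] {P Q : Matrix n n R} (hPQ : P * Q = 1) (M : Matrix n n R) :
    (P * M * Q).charpoly = M.charpoly := by
  rw [Matrix.mul_assoc, charpoly_mul_comm, Matrix.mul_assoc, mul_eq_one_comm.mp hPQ,
    Matrix.mul_one]

theorem Matrix.transpose_mul_self_eq_one_of_mul_self_eq_inv {n K : Type*} [Fintype n]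
    [DecidableEq n] [CommRing K] {Φ R : Matrix n n K} (hΦ : IsUnit Φ) (hR : R.IsSymm)
    (hRR : R * R = (Φᵀ * Φ)⁻¹) :
    (Φ * R)ᵀ * (Φ * R) = 1 := by
  have hdet : IsUnit (Φᵀ * Φ).det := by
    rw [det_mul, det_transpose]
    exact ((isUnit_iff_isUnit_det Φ).mp hΦ).mul ((isUnit_iff_isUnit_det Φ).mp hΦ)
  have hRS : R * (R * (Φᵀ * Φ)) = 1 := by
    rw [← Matrix.mul_assoc, hRR, nonsing_inv_mul _ hdet]
  rw [transpose_mul, hR.eq, ← mul_eq_one_comm.mp hRS]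
  simp only [Matrix.mul_assoc]

theorem SigmaPhi_eq_transpose_mul_Nmat {α ι : Type*} [Fintype α] [Fintype ι] {w : α → ℝ}
    (hw : ∀ a, 0 ≤ w a) (φ : α → ι → ℝ) :
    SigmaPhi w φ = (Nmat w φ)ᵀ * Nmat w φ := by
  ext i j
  simp only [SigmaPhi, Nmat, mul_apply, transpose_apply, of_apply]
  refine sum_congr rfl fun a _ => ?_
  linear_combination (-(φ a i * φ a j)) * Real.mul_self_sqrt (hw a)

/-- Holds for every real `a`: for `a ≤ 0` both sides vanish by the junk value `√a = 0`. -/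
theorem Real.inv_sqrt_mul_self (a : ℝ) : (√a)⁻¹ * a = √a := by
  rcases le_or_gt a 0 with ha | ha
  · simp [Real.sqrt_eq_zero'.mpr ha]
  · rw [inv_mul_eq_div, Real.div_sqrt]

theorem AbarN_apply (wb : Xb → ℝ) (wc : Xb → X → ℝ) (xb : Xb) (x : X) :
    AbarN wb wc xb x = √(wb xb) * wc xb x * (√(wX wb wc x))⁻¹ := by
  simp only [AbarN, Abar, mul_diagonal, diagonal_mul, of_apply]
  linear_combination wc xb x * (√(wX wb wc x))⁻¹ * Real.inv_sqrt_mul_self (wb xb)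

theorem AbarN_mul_Nmat {ι : Type*} {wb : Xb → ℝ} {wc : Xb → X → ℝ}
    (hwx : ∀ x, 0 < wX wb wc x) (φ : X → ι → ℝ) :
    AbarN wb wc * Nmat (wX wb wc) φ = Nmat wb (fbar wc φ) := by
  ext xb i
  simp only [AbarN_apply, Nmat, fbar, mul_apply, of_apply, mul_sum]
  refine sum_congr rfl fun x _ => ?_
  field_simp [(Real.sqrt_pos.mpr (hwx x)).ne']

theorem AN_eq_transpose_mul_AbarN {wb : Xb → ℝ} (hwb : ∀ xb, 0 ≤ wb xb) (wc : Xb → X → ℝ) :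
    AN wb wc = (AbarN wb wc)ᵀ * AbarN wb wc := by
  ext x x'
  rw [AN, mul_diagonal, diagonal_mul]
  simp only [Amat, of_apply, AbarN_apply, mul_apply, transpose_apply, sum_mul, mul_sum]
  refine sum_congr rfl fun xb _ => ?_
  linear_combination -(√(wX wb wc x))⁻¹ * wc xb x * wc xb x' * (√(wX wb wc x'))⁻¹ *
    Real.mul_self_sqrt (hwb xb)

theorem SigmaBar_eq_transpose_mul_AN_mul {wb : Xb → ℝ} {wc : Xb → X → ℝ}
    (hwb : ∀ xb, 0 ≤ wb xb) (hwx : ∀ x, 0 < wX wb wc x) {ι : Type*} [Fintype ι]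
    (φ : X → ι → ℝ) :
    SigmaBar wb wc φ = (Nmat (wX wb wc) φ)ᵀ * AN wb wc * Nmat (wX wb wc) φ := by
  have hcov : SigmaBar wb wc φ = SigmaPhi wb (fbar wc φ) := rfl
  rw [hcov, SigmaPhi_eq_transpose_mul_Nmat hwb, ← AbarN_mul_Nmat hwx,
    AN_eq_transpose_mul_AbarN hwb, transpose_mul]
  simp only [Matrix.mul_assoc]

theorem full_rank_features_reduce_to_laplacian_general
    (wb : Xb → ℝ) (wc : Xb → X → ℝ)
    (hwb : ∀ xb, 0 < wb xb)
    (hwx : ∀ x, 0 < wX wb wc x)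
    (φ : X → X → ℝ) (hPhi : IsUnit (Nmat (wX wb wc) φ))
    (R : Matrix X X ℝ) (hR : R.IsSymm)
    (hRR : R * R = (SigmaPhi (wX wb wc) φ)⁻¹) :
    (1 - R * SigmaBar wb wc φ * R).charpoly.roots
      = (1 - AN wb wc).charpoly.roots := by
  rw [SigmaPhi_eq_transpose_mul_Nmat (fun x => (hwx x).le)] at hRR
  rw [SigmaBar_eq_transpose_mul_AN_mul (fun xb => (hwb xb).le) hwx]
  set Φ := Nmat (wX wb wc) φ
  have hQ : (Φ * R)ᵀ * (Φ * R) = 1 :=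
    transpose_mul_self_eq_one_of_mul_self_eq_inv hPhi hR hRR
  have hconj : 1 - R * (Φᵀ * AN wb wc * Φ) * R = (Φ * R)ᵀ * (1 - AN wb wc) * (Φ * R) := by
    rw [Matrix.mul_sub, Matrix.sub_mul, Matrix.mul_one, hQ, transpose_mul, hR.eq]
    simp only [Matrix.mul_assoc]
  rw [hconj, charpoly_mul_mul_of_mul_eq_one hQ]

/-- if the features are full rank (`D = |X|` — features indexed by `X`
itself — and `Φ_n` invertible), then the eigenvalue multiset of
`I − Σ(φ)^{-1/2} Σ(φ̄) Σ(φ)^{-1/2}` equals the eigenvalue multiset of the normalized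
Laplacian `L_n = I − A_n`, stated via equality of the multisets of roots of the
characteristic polynomials. `R` is a symmetric square root of `Σ(φ)⁻¹`. -/
theorem full_rank_features_reduce_to_laplacian [Nonempty Xb] [Nonempty X]
    (wb : Xb → ℝ) (wc : Xb → X → ℝ)
    (hwb : ∀ xb, 0 < wb xb) (hwbsum : ∑ xb, wb xb = 1)
    (hwc : ∀ xb x, 0 ≤ wc xb x) (hwcsum : ∀ xb, ∑ x, wc xb x = 1)
    (hwx : ∀ x, 0 < wX wb wc x)
    (φ : X → X → ℝ) (hPhi : IsUnit (Nmat (wX wb wc) φ))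
    (R : Matrix X X ℝ) (hR : R.IsSymm)
    (hRR : R * R = (SigmaPhi (wX wb wc) φ)⁻¹) :
    (1 - R * SigmaBar wb wc φ * R).charpoly.roots
      = (1 - AN wb wc).charpoly.roots :=
  full_rank_features_reduce_to_laplacian_general wb wc hwb hwx φ hPhi R hR hRR
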